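/- Let ≿ be a complete transitive relation on a compact convex subset X of a Hausdorff topological vector space with closed contour sets, satisfying betweenness, with best and worst elements x* ≻ x_*, and let U be the calibration representation (x ∼ m_{U(x)}). Then U is continuous on X. -/

import Mathlib

/-!
Betweenness makes `t ↦ m_t` strictly increasing for `≿` on `[0, 1]`. Since `x ∼ m_{U x}`,
transitivity gives, for `t ∈ [0, 1]`, `U x ≤ t ↔ m_t ≿ x` and `t ≤ U x ↔ x ≿ m_t`. So the
sublevel and superlevel sets of `U` are the closed contour sets of `m_t`, and `U` is both lower
and upper semicontinuous on `X`.
-/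

open Set

section Semicontinuity

variable {α γ : Type*} [TopologicalSpace α] [LinearOrder γ] {f : α → γ} {s : Set α} {a b : γ}

lemma lowerSemicontinuousOn_of_mapsTo_Icc (hf : MapsTo f s (Icc a b))
    (h : ∀ t ∈ Icc a b, ∃ v, IsClosed v ∧ ∀ x ∈ s, (f x ≤ t ↔ x ∈ v)) :
    LowerSemicontinuousOn f s := by
  rw [lowerSemicontinuousOn_iff_preimage_Iic]
  intro t
  by_cases hta : t < a
  · refine ⟨∅, isClosed_empty, ?_⟩
    ext x
    simpa using fun hx => hta.trans_le (hf hx).1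
  by_cases htb : b < t
  · refine ⟨univ, isClosed_univ, ?_⟩
    ext x
    simpa using fun hx => (hf hx).2.trans htb.le
  obtain ⟨v, hv, hfv⟩ := h t ⟨not_lt.1 hta, not_lt.1 htb⟩
  exact ⟨v, hv, by ext x; simpa using fun hx => hfv x hx⟩

lemma upperSemicontinuousOn_of_mapsTo_Icc (hf : MapsTo f s (Icc a b))
    (h : ∀ t ∈ Icc a b, ∃ v, IsClosed v ∧ ∀ x ∈ s, (t ≤ f x ↔ x ∈ v)) :
    UpperSemicontinuousOn f s := by
  rw [upperSemicontinuousOn_iff_preimage_Ici]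
  intro t
  by_cases hta : t < a
  · refine ⟨univ, isClosed_univ, ?_⟩
    ext x
    simpa using fun hx => hta.le.trans (hf hx).1
  by_cases htb : b < t
  · refine ⟨∅, isClosed_empty, ?_⟩
    ext x
    simpa using fun hx => (hf hx).2.trans_lt htb
  obtain ⟨v, hv, hfv⟩ := h t ⟨not_lt.1 hta, not_lt.1 htb⟩
  exact ⟨v, hv, by ext x; simpa using fun hx => hfv x hx⟩

end Semicontinuity

/-- With `r x y` read as `x ≿ y`, this is `x ≻ y`. -/
def StrictPref {α : Type*} (r : α → α → Prop) (x y : α) : Prop :=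
  r x y ∧ ¬ r y x

section Indifference

variable {α : Type*} {r : α → α → Prop} {S : Set α} {m : ℝ → α} {x : α} {t u : ℝ}
  (htrans : ∀ x ∈ S, ∀ y ∈ S, ∀ z ∈ S, r x y → r y z → r x z)
  (hmS : ∀ t ∈ Icc (0 : ℝ) 1, m t ∈ S)
  (hmono : ∀ s ∈ Icc (0 : ℝ) 1, ∀ t ∈ Icc (0 : ℝ) 1, s < t → StrictPref r (m t) (m s))
include htrans hmS hmono

lemma le_iff_rel_of_indiff (hx : x ∈ S) (hu : u ∈ Icc (0 : ℝ) 1) (ht : t ∈ Icc (0 : ℝ) 1)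
    (hxu : r x (m u)) (hux : r (m u) x) : t ≤ u ↔ r x (m t) := by
  constructor
  · intro htu
    rcases htu.eq_or_lt with rfl | hlt
    · exact hxu
    · exact htrans _ hx _ (hmS u hu) _ (hmS t ht) hxu (hmono t ht u hu hlt).1
  · intro hxt
    by_contra! hlt
    exact (hmono u hu t ht hlt).2 (htrans _ (hmS u hu) _ hx _ (hmS t ht) hux hxt)

lemma ge_iff_rel_of_indiff (hx : x ∈ S) (hu : u ∈ Icc (0 : ℝ) 1) (ht : t ∈ Icc (0 : ℝ) 1)
    (hxu : r x (m u)) (hux : r (m u) x) : u ≤ t ↔ r (m t) x := by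
  constructor
  · intro hut
    rcases hut.eq_or_lt with rfl | hlt
    · exact hux
    · exact htrans _ (hmS t ht) _ (hmS u hu) _ hx (hmono u hu t ht hlt).1 hux
  · intro htx
    by_contra! hlt
    exact (hmono t ht u hu hlt).2 (htrans _ (hmS t ht) _ hx _ (hmS u hu) htx hxu)

end Indifference

section Mixture

variable {R E : Type*} [CommRing R] [AddCommGroup E] [Module R E]

def mixture (x y : E) (t : R) : E :=
  t • x + (1 - t) • y

@[simp] lemma mixture_zero (x y : E) : mixture x y (0 : R) = y := by
  simp [mixture]

@[simp] lemma mixture_one (x y : E) : mixture x y (1 : R) = x := by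
  simp [mixture]

lemma mixture_mixture_left (x y : E) (t u : R) :
    mixture (mixture x y t) y u = mixture x y (u * t) := by
  simp only [mixture]
  module

end Mixture

section Betweenness

variable {E : Type*} [AddCommGroup E] [Module ℝ E] {X : Set E} {r : E → E → Prop} {x y : E}

def Betweenness (X : Set E) (r : E → E → Prop) : Prop :=
  ∀ x ∈ X, ∀ y ∈ X, ∀ l ∈ Ioo (0 : ℝ) 1, StrictPref r x y →
    StrictPref r x (mixture x y l) ∧ StrictPref r (mixture x y l) y

lemma Convex.mixture_mem (hX : Convex ℝ X) (hx : x ∈ X) (hy : y ∈ X) {t : ℝ}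
    (ht : t ∈ Icc (0 : ℝ) 1) : mixture x y t ∈ X :=
  hX hx hy ht.1 (sub_nonneg.2 ht.2) (add_sub_cancel t 1)

lemma Betweenness.strictPref_mixture (hbet : Betweenness X r) (hX : Convex ℝ X)
    (hx : x ∈ X) (hy : y ∈ X) (hxy : StrictPref r x y) {s t : ℝ} (hs : 0 ≤ s) (hst : s < t)
    (ht : t ≤ 1) : StrictPref r (mixture x y t) (mixture x y s) := by
  have ht0 : 0 < t := hs.trans_lt hst
  have hty : StrictPref r (mixture x y t) y := by
    rcases ht.eq_or_lt with rfl | ht1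
    · simpa using hxy
    · exact (hbet x hx y hy t ⟨ht0, ht1⟩ hxy).2
  rcases hs.eq_or_lt with rfl | hs0
  · simpa using hty
  -- `m_s` lies between `m_t` and `y = m_0`, at parameter `s / t`.
  have key := (hbet _ (hX.mixture_mem hx hy ⟨ht0.le, ht⟩) y hy (s / t)
    ⟨div_pos hs0 ht0, (div_lt_one ht0).2 hst⟩ hty).1
  rwa [mixture_mixture_left, div_mul_cancel₀ s ht0.ne'] at key

end Betweenness

theorem calibration_continuous_general
    {E : Type*} [AddCommGroup E] [Module ℝ E] [TopologicalSpace E]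
    (X : Set E) (hXconv : Convex ℝ X)
    (r : E → E → Prop)
    (htrans : ∀ x ∈ X, ∀ y ∈ X, ∀ z ∈ X, r x y → r y z → r x z)
    (hclosed : ∀ y ∈ X, IsClosed {x ∈ X | r x y} ∧ IsClosed {x ∈ X | r y x})
    (hbet : ∀ x ∈ X, ∀ y ∈ X, ∀ l ∈ Ioo (0:ℝ) 1,
      (r x y ∧ ¬ r y x) →
        ((r x (l • x + (1 - l) • y) ∧ ¬ r (l • x + (1 - l) • y) x) ∧
         (r (l • x + (1 - l) • y) y ∧ ¬ r y (l • x + (1 - l) • y))))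
    (xstar xlow : E) (hxstar : xstar ∈ X) (hxlow : xlow ∈ X)
    (hstrict : r xstar xlow ∧ ¬ r xlow xstar)
    (U : E → ℝ)
    (hU : ∀ x ∈ X, U x ∈ Icc (0:ℝ) 1 ∧
      (r x (U x • xstar + (1 - U x) • xlow) ∧ r (U x • xstar + (1 - U x) • xlow) x)) :
    ContinuousOn U X := by
  have hmX : ∀ t ∈ Icc (0 : ℝ) 1, mixture xstar xlow t ∈ X :=
    fun t ht => hXconv.mixture_mem hxstar hxlow ht
  have hmono : ∀ s ∈ Icc (0 : ℝ) 1, ∀ t ∈ Icc (0 : ℝ) 1, s < t →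
      StrictPref r (mixture xstar xlow t) (mixture xstar xlow s) :=
    fun s hs t ht hst =>
      Betweenness.strictPref_mixture hbet hXconv hxstar hxlow hstrict hs.1 hst ht.2
  have hUIcc : MapsTo U X (Icc 0 1) := fun x hx => (hU x hx).1
  rw [continuousOn_iff_lower_upperSemicontinuousOn]
  constructor
  · refine lowerSemicontinuousOn_of_mapsTo_Icc hUIcc fun t ht =>
      ⟨_, (hclosed _ (hmX t ht)).2, fun x hx => ?_⟩
    obtain ⟨hUx, hxU, hUx'⟩ := hU x hx
    exact (ge_iff_rel_of_indiff htrans hmX hmono hx hUx ht hxU hUx').trans (and_iff_right hx).symm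
  · refine upperSemicontinuousOn_of_mapsTo_Icc hUIcc fun t ht =>
      ⟨_, (hclosed _ (hmX t ht)).1, fun x hx => ?_⟩
    obtain ⟨hUx, hxU, hUx'⟩ := hU x hx
    exact (le_iff_rel_of_indiff htrans hmX hmono hx hUx ht hxU hUx').trans (and_iff_right hx).symm

theorem calibration_continuous
    {E : Type*} [AddCommGroup E] [Module ℝ E] [TopologicalSpace E]
    [IsTopologicalAddGroup E] [ContinuousSMul ℝ E] [T2Space E]
    (X : Set E) (hXconv : Convex ℝ X) (hXcomp : IsCompact X)
    (r : E → E → Prop)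
    (hcomp : ∀ x ∈ X, ∀ y ∈ X, r x y ∨ r y x)
    (htrans : ∀ x ∈ X, ∀ y ∈ X, ∀ z ∈ X, r x y → r y z → r x z)
    (hclosed : ∀ y ∈ X, IsClosed {x ∈ X | r x y} ∧ IsClosed {x ∈ X | r y x})
    (hbet : ∀ x ∈ X, ∀ y ∈ X, ∀ l ∈ Ioo (0:ℝ) 1,
      (r x y ∧ ¬ r y x) →
        ((r x (l • x + (1 - l) • y) ∧ ¬ r (l • x + (1 - l) • y) x) ∧
         (r (l • x + (1 - l) • y) y ∧ ¬ r y (l • x + (1 - l) • y))))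
    (xstar xlow : E) (hxstar : xstar ∈ X) (hxlow : xlow ∈ X)
    (hbest : ∀ x ∈ X, r xstar x) (hworst : ∀ x ∈ X, r x xlow)
    (hstrict : r xstar xlow ∧ ¬ r xlow xstar)
    (U : E → ℝ)
    (hU : ∀ x ∈ X, U x ∈ Icc (0:ℝ) 1 ∧
      (r x (U x • xstar + (1 - U x) • xlow) ∧ r (U x • xstar + (1 - U x) • xlow) x)) :
    ContinuousOn U X :=
  calibration_continuous_general X hXconv r htrans hclosed hbet xstar xlow hxstar hxlow hstrict U hU
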